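/- arXiv:2506.15946 — 2 statements merged into one kernel-verified Lean document; each statement's English description precedes it below -/
import Mathlib

section
/- Let s ∈ (1/2, 1), Ω ⊂ ℝⁿ bounded open, B ⊂ Ω open, φ ∈ C_c^∞(Ω\B̄), c_ε ∈ ℝ with |c_ε| ≤ Cε^s, and v_ε: ℝⁿ → ℝ bounded measurable with ‖v_ε‖_∞ ≤ 1. Set u_ε := v_ε + c_ε φ. Then |u_ε(B,B^c) − v_ε(B,B^c)| ≤ C' ε^s for a constant C' independent of ε, where w(A,B) := ∫_A∫_B |w(x)−w(y)|²/|x−y|^{n+2s} dxdy. Consequently ε^{2s−1}|u_ε(B,B^c) − v_ε(B,B^c)| ≤ C' ε^{3s−1} → 0. -/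
open MeasureTheory

/-- The interaction energy `w(A,B) := ∫_A∫_B |w(x)−w(y)|²/|x−y|^{n+2s} dxdy`. -/
noncomputable def pairEnergy (n : ℕ) (s : ℝ) (w : EuclideanSpace ℝ (Fin n) → ℝ)
    (A B : Set (EuclideanSpace ℝ (Fin n))) : ℝ :=
  ∫ x in A, ∫ y in B, (w x - w y) ^ 2 / ‖x - y‖ ^ ((n : ℝ) + 2 * s)

set_option maxHeartbeats 2000000 in
/-- adding the small perturbation `c_ε φ` (with `|c_ε| ≤ C ε^s` and
`φ` supported away from `B`) changes the interaction `w(B,B^c)` by at most `C' ε^s`;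
consequently `ε^{2s−1}` times the change is at most `C' ε^{3s−1}`. -/
theorem pairEnergy_perturbation_bound {n : ℕ} (s : ℝ)
    (hs : s ∈ Set.Ioo (1 / 2 : ℝ) 1)
    (Ω : Set (EuclideanSpace ℝ (Fin n))) (hΩo : IsOpen Ω)
    (hΩb : Bornology.IsBounded Ω)
    (B : Set (EuclideanSpace ℝ (Fin n))) (hBo : IsOpen B) (hBΩ : B ⊆ Ω)
    (φ : EuclideanSpace ℝ (Fin n) → ℝ) (hφ : ContDiff ℝ (⊤ : ℕ∞) φ)
    (hφc : HasCompactSupport φ) (hφsupp : tsupport φ ⊆ Ω \ closure B)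
    (C : ℝ) (hC : 0 < C) (c : ℝ → ℝ) (hc : ∀ ε > (0:ℝ), |c ε| ≤ C * ε ^ s)
    (v : ℝ → EuclideanSpace ℝ (Fin n) → ℝ)
    (hvm : ∀ ε, Measurable (v ε)) (hvb : ∀ ε > (0:ℝ), ∀ x, |v ε x| ≤ 1) :
    ∃ C' > (0:ℝ), ∀ ε : ℝ, 0 < ε → ε ≤ 1 →
      (|pairEnergy n s (fun x => v ε x + c ε * φ x) B Bᶜ
          - pairEnergy n s (v ε) B Bᶜ| ≤ C' * ε ^ s) ∧
      (ε ^ (2 * s - 1) *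
          |pairEnergy n s (fun x => v ε x + c ε * φ x) B Bᶜ
            - pairEnergy n s (v ε) B Bᶜ| ≤ C' * ε ^ (3 * s - 1)) := by
  obtain ⟨hs0, hs1⟩ := hs
  have hs0' : (0:ℝ) < s := lt_trans (by norm_num) hs0
  set p : ℝ := (n:ℝ) + 2 * s with hp
  have hppos : 0 < p := by positivity
  -- second inequality always follows from the first
  have hstep : ∀ C' > (0:ℝ), ∀ ε : ℝ, 0 < ε → ∀ X : ℝ,
      X ≤ C' * ε ^ s → 0 ≤ X → ε ^ (2 * s - 1) * X ≤ C' * ε ^ (3 * s - 1) := by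
    intro C' hC' ε hε X hX hX0
    have h1 : ε ^ (2 * s - 1) * X ≤ ε ^ (2 * s - 1) * (C' * ε ^ s) :=
      mul_le_mul_of_nonneg_left hX (Real.rpow_nonneg hε.le _)
    have h2 : ε ^ (2 * s - 1) * ε ^ s = ε ^ (3 * s - 1) := by
      rw [← Real.rpow_add hε]; ring_nf
    calc ε ^ (2 * s - 1) * X ≤ ε ^ (2 * s - 1) * (C' * ε ^ s) := h1
      _ = C' * (ε ^ (2 * s - 1) * ε ^ s) := by ring
      _ = C' * ε ^ (3 * s - 1) := by rw [h2]
  rcases Set.eq_empty_or_nonempty B with hBe | hBne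
  · refine ⟨1, one_pos, fun ε hε hε1 => ?_⟩
    have h0 : ∀ w, pairEnergy n s w B Bᶜ = 0 := by
      intro w; unfold pairEnergy; rw [hBe]; simp
    have hh : |pairEnergy n s (fun x => v ε x + c ε * φ x) B Bᶜ
        - pairEnergy n s (v ε) B Bᶜ| ≤ 1 * ε ^ s := by
      rw [h0, h0]; simp; positivity
    exact ⟨hh, hstep 1 one_pos ε hε _ hh (abs_nonneg _)⟩
  rcases Set.eq_empty_or_nonempty (tsupport φ) with hTe | hTne
  · have hφ0 : ∀ x, φ x = 0 := fun x =>
      image_eq_zero_of_notMem_tsupport (by rw [hTe]; exact Set.notMem_empty x)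
    refine ⟨1, one_pos, fun ε hε hε1 => ?_⟩
    have he : (fun x => v ε x + c ε * φ x) = v ε := funext fun x => by rw [hφ0]; ring
    have hh : |pairEnergy n s (fun x => v ε x + c ε * φ x) B Bᶜ
        - pairEnergy n s (v ε) B Bᶜ| ≤ 1 * ε ^ s := by
      rw [he]; simp; positivity
    exact ⟨hh, hstep 1 one_pos ε hε _ hh (abs_nonneg _)⟩
  -- main case
  obtain ⟨M, hM⟩ := hφc.exists_bound_of_continuous hφ.continuous
  have hM' : ∀ y, |φ y| ≤ M := fun y => by
    have := hM y; rwa [Real.norm_eq_abs] at this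
  have hM0 : 0 ≤ M := le_trans (abs_nonneg _) (hM' 0)
  -- separation
  have hTcpt : IsCompact (tsupport φ) := hφc
  have hclB : (closure B).Nonempty := hBne.closure
  obtain ⟨y₀, hy₀T, hy₀min⟩ := hTcpt.exists_isMinOn hTne
    (Metric.continuous_infDist_pt (closure B)).continuousOn
  set d : ℝ := Metric.infDist y₀ (closure B) with hd_def
  have hd : 0 < d :=
    (isClosed_closure.notMem_iff_infDist_pos hclB).1 (fun h => (hφsupp hy₀T).2 h)
  have hsep : ∀ x ∈ B, ∀ y ∈ tsupport φ, d ≤ ‖x - y‖ := by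
    intro x hx y hy
    have h1 : d ≤ Metric.infDist y (closure B) := hy₀min hy
    have h2 : Metric.infDist y (closure B) ≤ dist y x :=
      Metric.infDist_le_dist_of_mem (subset_closure hx)
    have : dist y x = ‖x - y‖ := by rw [dist_eq_norm, norm_sub_rev]
    linarith [this ▸ h2]
  have hdp : 0 < d ^ p := Real.rpow_pos_of_pos hd p
  set K₀ : ℝ := M * (C * M + 4) / d ^ p with hK₀_def
  have hK₀ : 0 ≤ K₀ := by positivity
  have hμT : volume (tsupport φ) < ⊤ := hTcpt.measure_lt_top
  set KK : ℝ := K₀ * (volume (tsupport φ)).toReal with hKK_def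
  have hKK0 : 0 ≤ KK := mul_nonneg hK₀ ENNReal.toReal_nonneg
  have hμB : volume B < ⊤ := (hΩb.subset hBΩ).measure_lt_top
  set C' : ℝ := C * (KK * (volume B).toReal) + 1 with hC'_def
  have hC'pos : 0 < C' := by positivity
  refine ⟨C', hC'pos, fun ε hε hε1 => ?_⟩
  have hεs1 : ε ^ s ≤ 1 := Real.rpow_le_one hε.le hε1 hs0'.le
  have hcC : |c ε| ≤ C := le_trans (hc ε hε) (by nlinarith)
  set u : EuclideanSpace ℝ (Fin n) → ℝ := fun x => v ε x + c ε * φ x with hu_def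
  have hum : Measurable u := (hvm ε).add (measurable_const.mul hφ.continuous.measurable)
  -- kernel measurability
  have hker : Continuous (fun q : EuclideanSpace ℝ (Fin n) × EuclideanSpace ℝ (Fin n) => ‖q.1 - q.2‖ ^ p) :=
    ((continuous_fst.sub continuous_snd).norm).rpow_const (fun _ => Or.inr hppos.le)
  have hmeas2 : ∀ w : EuclideanSpace ℝ (Fin n) → ℝ, Measurable w →
      Measurable (fun q : EuclideanSpace ℝ (Fin n) × EuclideanSpace ℝ (Fin n) => (w q.1 - w q.2) ^ 2 / ‖q.1 - q.2‖ ^ p) := by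
    intro w hw
    exact (((hw.comp measurable_fst).sub (hw.comp measurable_snd)).pow_const 2).div
      hker.measurable
  have hmeas1 : ∀ w : EuclideanSpace ℝ (Fin n) → ℝ, Measurable w → ∀ x : EuclideanSpace ℝ (Fin n),
      Measurable (fun y : EuclideanSpace ℝ (Fin n) => (w x - w y) ^ 2 / ‖x - y‖ ^ p) := by
    intro w hw x
    exact ((measurable_const.sub hw).pow_const 2).div
      (((continuous_const.sub continuous_id).norm.rpow_const
        (fun _ => Or.inr hppos.le)).measurable)
  -- inner integrals
  set Iu : EuclideanSpace ℝ (Fin n) → ℝ := fun x => ∫ y in Bᶜ, (u x - u y) ^ 2 / ‖x - y‖ ^ p with hIu_def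
  set Iv : EuclideanSpace ℝ (Fin n) → ℝ := fun x => ∫ y in Bᶜ, (v ε x - v ε y) ^ 2 / ‖x - y‖ ^ p with hIv_def
  have hIu_sm : StronglyMeasurable Iu :=
    MeasureTheory.StronglyMeasurable.integral_prod_right' (ν := volume.restrict Bᶜ)
      (f := fun q : EuclideanSpace ℝ (Fin n) × EuclideanSpace ℝ (Fin n) =>
        (u q.1 - u q.2) ^ 2 / ‖q.1 - q.2‖ ^ p) (hmeas2 u hum).stronglyMeasurable
  have hIv_sm : StronglyMeasurable Iv :=
    MeasureTheory.StronglyMeasurable.integral_prod_right' (ν := volume.restrict Bᶜ)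
      (f := fun q : EuclideanSpace ℝ (Fin n) × EuclideanSpace ℝ (Fin n) =>
        (v ε q.1 - v ε q.2) ^ 2 / ‖q.1 - q.2‖ ^ p) (hmeas2 (v ε) (hvm ε)).stronglyMeasurable
  -- the key pointwise bound on the difference of inner integrals
  have key : ∀ x ∈ B, |Iu x - Iv x| ≤ |c ε| * KK := by
    intro x hx
    have hφx : φ x = 0 :=
      image_eq_zero_of_notMem_tsupport (fun hxT => (hφsupp hxT).2 (subset_closure hx))
    set h : EuclideanSpace ℝ (Fin n) → ℝ := fun y =>
      (u x - u y) ^ 2 / ‖x - y‖ ^ p - (v ε x - v ε y) ^ 2 / ‖x - y‖ ^ p with hh_def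
    have hhval : ∀ y, h y =
        (c ε * φ y) * (c ε * φ y - 2 * (v ε x - v ε y)) / ‖x - y‖ ^ p := by
      intro y
      show (u x - u y) ^ 2 / ‖x - y‖ ^ p - (v ε x - v ε y) ^ 2 / ‖x - y‖ ^ p = _
      rw [div_sub_div_same]
      congr 1
      show (v ε x + c ε * φ x - (v ε y + c ε * φ y)) ^ 2 - (v ε x - v ε y) ^ 2 = _
      rw [hφx]; ring
    have hbound : ∀ y ∈ tsupport φ, |h y| ≤ |c ε| * K₀ := by
      intro y hy
      rw [hhval, abs_div]
      have hden0 : 0 ≤ ‖x - y‖ ^ p := Real.rpow_nonneg (norm_nonneg _) _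
      have hq : d ^ p ≤ |‖x - y‖ ^ p| := by
        rw [abs_of_nonneg hden0]
        exact Real.rpow_le_rpow hd.le (hsep x hx y hy) hppos.le
      have h1 : |c ε * φ y| ≤ |c ε| * M := by
        rw [abs_mul]; exact mul_le_mul_of_nonneg_left (hM' y) (abs_nonneg _)
      have h1' : |c ε * φ y| ≤ C * M :=
        le_trans h1 (mul_le_mul_of_nonneg_right hcC hM0)
      have h2 : |c ε * φ y - 2 * (v ε x - v ε y)| ≤ C * M + 4 := by
        obtain ⟨l1, r1⟩ := abs_le.mp h1'
        obtain ⟨l2, r2⟩ := abs_le.mp (hvb ε hε x)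
        obtain ⟨l3, r3⟩ := abs_le.mp (hvb ε hε y)
        rw [abs_le]; constructor <;> nlinarith
      have hnum : |(c ε * φ y) * (c ε * φ y - 2 * (v ε x - v ε y))|
          ≤ |c ε| * (M * (C * M + 4)) := by
        rw [abs_mul]
        calc |c ε * φ y| * |c ε * φ y - 2 * (v ε x - v ε y)|
            ≤ (|c ε| * M) * (C * M + 4) :=
              mul_le_mul h1 h2 (abs_nonneg _) (by positivity)
          _ = |c ε| * (M * (C * M + 4)) := by ring
      calc |(c ε * φ y) * (c ε * φ y - 2 * (v ε x - v ε y))| / |‖x - y‖ ^ p|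
          ≤ (|c ε| * (M * (C * M + 4))) / d ^ p := div_le_div₀ (by positivity) hnum hdp hq
        _ = |c ε| * K₀ := by rw [hK₀_def]; ring
    have hzero : ∀ y, y ∉ tsupport φ → h y = 0 := by
      intro y hy
      rw [hhval, image_eq_zero_of_notMem_tsupport hy]
      simp
    set g : EuclideanSpace ℝ (Fin n) → ℝ := (tsupport φ).indicator (fun _ => |c ε| * K₀) with hg_def
    have hgK : 0 ≤ |c ε| * K₀ := mul_nonneg (abs_nonneg _) hK₀
    have hgint : Integrable g (volume.restrict Bᶜ) := by
      rw [hg_def, integrable_indicator_iff hTcpt.measurableSet]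
      refine integrableOn_const ?_
      exact (lt_of_le_of_lt (Measure.restrict_apply_le _ _) hμT).ne
    have hhle : ∀ y, |h y| ≤ g y := by
      intro y
      by_cases hy : y ∈ tsupport φ
      · rw [hg_def, Set.indicator_of_mem hy]; exact hbound y hy
      · rw [hg_def, Set.indicator_of_notMem hy, hzero y hy, abs_zero]
    have hhm : AEStronglyMeasurable h (volume.restrict Bᶜ) :=
      ((hmeas1 u hum x).sub (hmeas1 (v ε) (hvm ε) x)).aestronglyMeasurable
    have hhint : Integrable h (volume.restrict Bᶜ) := by
      refine hgint.mono hhm (Filter.Eventually.of_forall fun y => ?_)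
      rw [Real.norm_eq_abs, Real.norm_eq_abs, abs_of_nonneg (le_trans (abs_nonneg _) (hhle y))]
      exact hhle y
    have hint_g : ∫ y in Bᶜ, g y ≤ |c ε| * KK := by
      rw [hg_def, integral_indicator_const _ hTcpt.measurableSet, smul_eq_mul]
      have hr : ((volume.restrict Bᶜ) (tsupport φ)).toReal ≤ (volume (tsupport φ)).toReal :=
        ENNReal.toReal_mono hμT.ne (Measure.restrict_apply_le _ _)
      calc ((volume.restrict Bᶜ) (tsupport φ)).toReal * (|c ε| * K₀)
          ≤ (volume (tsupport φ)).toReal * (|c ε| * K₀) :=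
            mul_le_mul_of_nonneg_right hr hgK
        _ = |c ε| * KK := by rw [hKK_def]; ring
    have hIh : |∫ y in Bᶜ, h y| ≤ |c ε| * KK := by
      calc |∫ y in Bᶜ, h y| ≤ ∫ y in Bᶜ, |h y| := by
            rw [← Real.norm_eq_abs (∫ y in Bᶜ, h y)]
            exact le_of_le_of_eq (norm_integral_le_integral_norm h)
              (by simp [Real.norm_eq_abs])
        _ ≤ ∫ y in Bᶜ, g y :=
            integral_mono hhint.abs hgint hhle
        _ ≤ |c ε| * KK := hint_g
    by_cases hvint : Integrable (fun y => (v ε x - v ε y) ^ 2 / ‖x - y‖ ^ p)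
        (volume.restrict Bᶜ)
    · have hrw : (fun y : EuclideanSpace ℝ (Fin n) => (u x - u y) ^ 2 / ‖x - y‖ ^ p)
          = fun y => (v ε x - v ε y) ^ 2 / ‖x - y‖ ^ p + h y := by
        funext y; rw [hh_def]; ring
      have huint : Integrable (fun y => (u x - u y) ^ 2 / ‖x - y‖ ^ p)
          (volume.restrict Bᶜ) := by
        rw [hrw]; exact hvint.add hhint
      have hdiff : Iu x - Iv x = ∫ y in Bᶜ, h y := by
        show (∫ y in Bᶜ, (u x - u y) ^ 2 / ‖x - y‖ ^ p)
          - (∫ y in Bᶜ, (v ε x - v ε y) ^ 2 / ‖x - y‖ ^ p) = _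
        rw [hrw, integral_add hvint hhint]; ring
      rw [hdiff]; exact hIh
    · have huint : ¬ Integrable (fun y => (u x - u y) ^ 2 / ‖x - y‖ ^ p)
          (volume.restrict Bᶜ) := by
        intro hI
        apply hvint
        have hrw : (fun y : EuclideanSpace ℝ (Fin n) => (v ε x - v ε y) ^ 2 / ‖x - y‖ ^ p)
            = fun y => (u x - u y) ^ 2 / ‖x - y‖ ^ p - h y := by
          funext y; rw [hh_def]; ring
        rw [hrw]; exact hI.sub hhint
      have e1 : Iu x = 0 := integral_undef huint
      have e2 : Iv x = 0 := integral_undef hvint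
      rw [e1, e2, sub_zero, abs_zero]
      exact mul_nonneg (abs_nonneg _) hKK0
  -- outer level
  have hpeu : pairEnergy n s u B Bᶜ = ∫ x in B, Iu x := rfl
  have hpev : pairEnergy n s (v ε) B Bᶜ = ∫ x in B, Iv x := rfl
  have hDm : AEStronglyMeasurable (fun x => Iu x - Iv x) (volume.restrict B) :=
    (hIu_sm.sub hIv_sm).aestronglyMeasurable
  have hDint : Integrable (fun x => Iu x - Iv x) (volume.restrict B) := by
    refine Integrable.mono' (g := fun _ => |c ε| * KK)
      (integrableOn_const hμB.ne) hDm ?_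
    rw [ae_restrict_iff' hBo.measurableSet]
    exact Filter.Eventually.of_forall fun x hx => by
      rw [Real.norm_eq_abs]; exact key x hx
  have hmain : |pairEnergy n s u B Bᶜ - pairEnergy n s (v ε) B Bᶜ| ≤ C' * ε ^ s := by
    have hbd : |pairEnergy n s u B Bᶜ - pairEnergy n s (v ε) B Bᶜ|
        ≤ (|c ε| * KK) * (volume B).toReal := by
      by_cases hIvint : Integrable Iv (volume.restrict B)
      · have hIuint : Integrable Iu (volume.restrict B) := by
          have hrw : Iu = fun x => Iv x + (Iu x - Iv x) := funext fun x => by ring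
          rw [hrw]; exact hIvint.add hDint
        have hsplit : pairEnergy n s u B Bᶜ - pairEnergy n s (v ε) B Bᶜ
            = ∫ x in B, (Iu x - Iv x) := by
          rw [hpeu, hpev, ← integral_sub hIuint hIvint]
        rw [hsplit, ← Real.norm_eq_abs]
        exact norm_setIntegral_le_of_norm_le_const hμB
          (fun x hx => by rw [Real.norm_eq_abs]; exact key x hx)
      · have hIunint : ¬ Integrable Iu (volume.restrict B) := by
          intro hI
          apply hIvint
          have hrw : Iv = fun x => Iu x - (Iu x - Iv x) := funext fun x => by ring
          rw [hrw]; exact hI.sub hDint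
        rw [hpeu, hpev, integral_undef hIunint, integral_undef hIvint, sub_zero, abs_zero]
        positivity
    have hce : |c ε| ≤ C * ε ^ s := hc ε hε
    have hεs : 0 < ε ^ s := Real.rpow_pos_of_pos hε s
    calc |pairEnergy n s u B Bᶜ - pairEnergy n s (v ε) B Bᶜ|
        ≤ (|c ε| * KK) * (volume B).toReal := hbd
      _ ≤ ((C * ε ^ s) * KK) * (volume B).toReal := by
          apply mul_le_mul_of_nonneg_right _ ENNReal.toReal_nonneg
          exact mul_le_mul_of_nonneg_right hce hKK0
      _ = (C * (KK * (volume B).toReal)) * ε ^ s := by ring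
      _ ≤ C' * ε ^ s := by
          apply mul_le_mul_of_nonneg_right _ hεs.le
          rw [hC'_def]; linarith
  exact ⟨hmain, hstep C' hC'pos ε hε _ hmain (abs_nonneg _)⟩
end

section
/- There is no function u ∈ C²([−1,1]) solving u'' = u³ − u on (−1,1) with u(−1) = u(1) = −1 and ∫_{−1}^{1} u dx = 0. -/
open MeasureTheory intervalIntegral

set_option maxHeartbeats 1000000 in
/-- there is no `C²` solution of `u'' = u³ − u` on `(−1,1)` with
`u(−1) = u(1) = −1` and `∫_{−1}^{1} u = 0`. -/
theorem no_solution_overdetermined_allen_cahn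
    (u : ℝ → ℝ) (hu : ContDiffOn ℝ 2 u (Set.Icc (-1 : ℝ) 1))
    (hode : ∀ x ∈ Set.Ioo (-1 : ℝ) 1, deriv (deriv u) x = u x ^ 3 - u x)
    (hbc₁ : u (-1) = -1) (hbc₂ : u 1 = -1)
    (hmass : ∫ x in (-1 : ℝ)..1, u x = 0) :
    False := by
  have h11 : (-1 : ℝ) < 1 := by norm_num
  have hUD : UniqueDiffOn ℝ (Set.Icc (-1 : ℝ) 1) := uniqueDiffOn_Icc h11
  have hucont : ContinuousOn u (Set.Icc (-1 : ℝ) 1) := hu.continuousOn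
  set v := derivWithin u (Set.Icc (-1 : ℝ) 1) with hvdef
  have hv1 : ContDiffOn ℝ 1 v (Set.Icc (-1 : ℝ) 1) := hu.derivWithin hUD (by norm_num)
  have hvcont : ContinuousOn v (Set.Icc (-1 : ℝ) 1) := hv1.continuousOn
  have hudiff : DifferentiableOn ℝ u (Set.Icc (-1 : ℝ) 1) := hu.differentiableOn (by norm_num)
  have hvdiff : DifferentiableOn ℝ v (Set.Icc (-1 : ℝ) 1) := hv1.differentiableOn (by norm_num)
  have hmem : ∀ x ∈ Set.Ioo (-1 : ℝ) 1, Set.Icc (-1 : ℝ) 1 ∈ nhds x :=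
    fun x hx => Icc_mem_nhds hx.1 hx.2
  have hveq : ∀ x ∈ Set.Ioo (-1 : ℝ) 1, v x = deriv u x :=
    fun x hx => derivWithin_of_mem_nhds (hmem x hx)
  have hu' : ∀ x ∈ Set.Ioo (-1 : ℝ) 1, HasDerivAt u (v x) x := by
    intro x hx
    have hd : DifferentiableAt ℝ u x :=
      (hudiff x (Set.Ioo_subset_Icc_self hx)).differentiableAt (hmem x hx)
    rw [hveq x hx]; exact hd.hasDerivAt
  have hv' : ∀ x ∈ Set.Ioo (-1 : ℝ) 1, HasDerivAt v (u x ^ 3 - u x) x := by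
    intro x hx
    have hd : DifferentiableAt ℝ v x :=
      (hvdiff x (Set.Ioo_subset_Icc_self hx)).differentiableAt (hmem x hx)
    have heq : v =ᶠ[nhds x] deriv u := by
      filter_upwards [Ioo_mem_nhds hx.1 hx.2] with y hy
      exact hveq y hy
    have hdv : deriv v x = u x ^ 3 - u x := by
      rw [heq.deriv_eq]; exact hode x hx
    rw [← hdv]; exact hd.hasDerivAt
  -- max point
  obtain ⟨x₀, hx₀S, hmax⟩ := isCompact_Icc.exists_isMaxOn
    (Set.nonempty_Icc.mpr h11.le) hucont
  have hmax' : ∀ x ∈ Set.Icc (-1 : ℝ) 1, u x ≤ u x₀ := fun x hx => hmax hx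
  -- integrability
  have hInt : IntervalIntegrable u volume (-1) 1 := by
    apply ContinuousOn.intervalIntegrable
    rwa [Set.uIcc_of_le h11.le]
  have hμ0 : 0 ≤ u x₀ := by
    by_contra hneg
    push_neg at hneg
    have hle : (∫ x in (-1 : ℝ)..1, u x) ≤ ∫ _x in (-1 : ℝ)..1, u x₀ :=
      intervalIntegral.integral_mono_on h11.le hInt intervalIntegrable_const hmax'
    rw [hmass, intervalIntegral.integral_const] at hle
    simp at hle
    linarith
  have hx₀ : x₀ ∈ Set.Ioo (-1 : ℝ) 1 := by
    rcases hx₀S with ⟨hl, hr⟩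
    constructor
    · rcases lt_or_eq_of_le hl with h | h
      · exact h
      · exfalso; rw [← h, hbc₁] at hμ0; linarith
    · rcases lt_or_eq_of_le hr with h | h
      · exact h
      · exfalso; rw [h, hbc₂] at hμ0; linarith
  have hvx₀ : v x₀ = 0 := by
    rw [hveq x₀ hx₀]
    exact (hmax.isLocalMax (hmem x₀ hx₀)).deriv_eq_zero
  -- energy
  have hEd : ∀ x ∈ Set.Ioo (-1 : ℝ) 1,
      HasDerivAt (fun y => 1/2 * v y ^ 2 - 1/4 * u y ^ 4 + 1/2 * u y ^ 2) 0 x := by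
    intro x hx
    have h1 := hu' x hx
    have h2 := hv' x hx
    have := ((((h2.fun_pow 2).const_mul (1/2 : ℝ)).fun_sub
      ((h1.fun_pow 4).const_mul (1/4 : ℝ))).fun_add ((h1.fun_pow 2).const_mul (1/2 : ℝ)))
    refine this.congr_deriv ?_
    push_cast
    ring
  have hEcont : ContinuousOn (fun y => 1/2 * v y ^ 2 - 1/4 * u y ^ 4 + 1/2 * u y ^ 2)
      (Set.Icc (-1 : ℝ) 1) := by
    exact ((continuousOn_const.mul (hvcont.pow 2)).sub
      (continuousOn_const.mul (hucont.pow 4))).add (continuousOn_const.mul (hucont.pow 2))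
  have hIccsub : Set.Icc x₀ 1 ⊆ Set.Icc (-1 : ℝ) 1 := Set.Icc_subset_Icc hx₀.1.le le_rfl
  have hIco : Set.Ico x₀ 1 ⊆ Set.Ioo (-1 : ℝ) 1 :=
    fun y hy => ⟨lt_of_lt_of_le hx₀.1 hy.1, hy.2⟩
  have hEconst : (fun y => 1/2 * v y ^ 2 - 1/4 * u y ^ 4 + 1/2 * u y ^ 2) 1
      = (fun y => 1/2 * v y ^ 2 - 1/4 * u y ^ 4 + 1/2 * u y ^ 2) x₀ :=
    constant_of_has_deriv_right_zero (hEcont.mono hIccsub)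
      (fun y hy => (hEd y (hIco hy)).hasDerivWithinAt) 1
      (Set.right_mem_Icc.mpr hx₀.2.le)
  simp only [hbc₂] at hEconst
  have hμ1 : u x₀ = 1 := by
    nlinarith [sq_nonneg (v 1), sq_nonneg (u x₀ ^ 2 - 1), sq_nonneg (u x₀ - 1),
      sq_nonneg (u x₀ + 1), hvx₀, hEconst]
  -- Gronwall
  obtain ⟨C, hC⟩ := isCompact_Icc.exists_bound_of_continuousOn hucont
  have hC1 : (1 : ℝ) ≤ C := by
    have := hC (-1) (Set.left_mem_Icc.mpr h11.le)
    rw [hbc₁] at this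
    simpa using this
  set M : ℝ := C ^ 2 + C + 1 with hMdef
  have hhd : ∀ t ∈ Set.Ico x₀ 1,
      HasDerivAt (fun y => (u y - 1) ^ 2 + v y ^ 2)
        (2 * (u t - 1) * v t + 2 * v t * (u t ^ 3 - u t)) t := by
    intro t ht
    have h1 := hu' t (hIco ht)
    have h2 := hv' t (hIco ht)
    have := (((h1.sub_const 1).fun_pow 2).fun_add (h2.fun_pow 2))
    refine this.congr_deriv ?_
    push_cast
    ring
  have hhcont : ContinuousOn (fun y => (u y - 1) ^ 2 + v y ^ 2) (Set.Icc x₀ 1) :=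
    (((hucont.sub continuousOn_const).pow 2).add (hvcont.pow 2)).mono hIccsub
  have hbound : ∀ t ∈ Set.Ico x₀ 1,
      ‖2 * (u t - 1) * v t + 2 * v t * (u t ^ 3 - u t)‖
        ≤ M * ‖(u t - 1) ^ 2 + v t ^ 2‖ + 0 := by
    intro t ht
    have haC : |u t| ≤ C := by
      have := hC t (hIccsub ⟨ht.1, ht.2.le⟩)
      simpa using this
    have haC1 : -C ≤ u t := (abs_le.mp haC).1
    have haC2 : u t ≤ C := (abs_le.mp haC).2
    have hsle : u t ^ 2 + u t + 1 ≤ M := by nlinarith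
    have hs0 : (0 : ℝ) ≤ u t ^ 2 + u t + 1 := by nlinarith [sq_nonneg (2 * u t + 1)]
    have hnn : (0 : ℝ) ≤ (u t - 1) ^ 2 + v t ^ 2 := by positivity
    rw [Real.norm_eq_abs, Real.norm_eq_abs, abs_of_nonneg hnn, abs_le]
    constructor
    · nlinarith [sq_nonneg (v t + (u t - 1)), sq_nonneg (v t - (u t - 1)),
        sq_nonneg (u t - 1), sq_nonneg (v t)]
    · nlinarith [sq_nonneg (v t + (u t - 1)), sq_nonneg (v t - (u t - 1)),
        sq_nonneg (u t - 1), sq_nonneg (v t)]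
  have hstart : ‖(fun y => (u y - 1) ^ 2 + v y ^ 2) x₀‖ ≤ 0 := by
    simp [hμ1, hvx₀]
  have hg := norm_le_gronwallBound_of_norm_deriv_right_le hhcont
    (fun t ht => (hhd t ht).hasDerivWithinAt) hstart hbound 1
    (Set.right_mem_Icc.mpr hx₀.2.le)
  rw [gronwallBound_ε0] at hg
  simp only [zero_mul] at hg
  have hfin : (u 1 - 1) ^ 2 + v 1 ^ 2 = 0 := by
    simpa using hg
  rw [hbc₂] at hfin
  nlinarith [sq_nonneg (v 1)]
end
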